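/- arXiv:2310.07421 — 3 statements merged into one kernel-verified Lean document; each statement's English description precedes it below -/
import Mathlib

section
/- Let R be the group presentation with generators a, b, c, d, e and relations (R1)–(R8) as defined (Borisov-type presentation with encoded letters μ(s_1), μ(s_2), μ(k), μ(t) as specific words in a, b). Adding the two relations a = 1 and c = 1 to R yields a presentation of the trivial group. -/
namespace Stmt10

/-- The free group on the five generators `a, b, c, d, e`. -/
abbrev F5 := FreeGroup (Fin 5)

def a : F5 := FreeGroup.of 0
def b : F5 := FreeGroup.of 1
def c : F5 := FreeGroup.of 2
def d : F5 := FreeGroup.of 3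
def e : F5 := FreeGroup.of 4

/-- The encoded letters: `μw i` is the word
`a^{10i}b^{10i}a^{-(10i+1)}b^{-(10i+1)}a^{-(10i+2)}b^{-(10i+2)}a^{10i+3}b^{10i+3}
a^{10i+4}b^{10i+4}a^{-(10i+5)}b^{-(10i+5)}a^{-(10i+6)}b^{-(10i+6)}a^{10i+8}b^{10i+8}`
in `a, b`; `μ(s₁) = μw 1`, `μ(s₂) = μw 2`, `μ(k) = μw 3`, `μ(t) = μw 4`. -/
def μw (i : ℕ) : F5 :=
  a ^ (10 * (i : ℤ)) * b ^ (10 * (i : ℤ)) *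
  a ^ (-(10 * (i : ℤ) + 1)) * b ^ (-(10 * (i : ℤ) + 1)) *
  a ^ (-(10 * (i : ℤ) + 2)) * b ^ (-(10 * (i : ℤ) + 2)) *
  a ^ (10 * (i : ℤ) + 3) * b ^ (10 * (i : ℤ) + 3) *
  a ^ (10 * (i : ℤ) + 4) * b ^ (10 * (i : ℤ) + 4) *
  a ^ (-(10 * (i : ℤ) + 5)) * b ^ (-(10 * (i : ℤ) + 5)) *
  a ^ (-(10 * (i : ℤ) + 6)) * b ^ (-(10 * (i : ℤ) + 6)) *
  a ^ (10 * (i : ℤ) + 8) * b ^ (10 * (i : ℤ) + 8)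

/-- `μ(s₁)` and `μ(s₂)`. -/
def μs (j : Fin 2) : F5 := μw ((j : ℕ) + 1)

def μk : F5 := μw 3
def μt : F5 := μw 4

/-- The encoding of a positive word in `s₁, s₂`. -/
def μword (l : List (Fin 2)) : F5 := (l.map μs).prod

/-- The relators (R1)–(R8) of the presentation `R`.  Here `F₁ = s₁s₁s₂s₁s₂`,
`E₁ = s₂s₁s₁`, `F₂ = s₁s₁s₂s₂`, `E₂ = s₂s₂s₁`, while `F₃`, `E₃` and `P` are the
remaining (fixed) words of Matiyasevich's Thue system, and `α > 5`. -/
def rels (α : ℕ) (F₃ E₃ P : List (Fin 2)) : Set F5 :=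
  (Set.range fun j : Fin 2 => d ^ (α : ℤ) * μs j * (μs j * d)⁻¹) ∪
  (Set.range fun j : Fin 2 => e * μs j * (μs j * e ^ (α : ℤ))⁻¹) ∪
  ({ d * μword [0, 0, 1, 0, 1] * e * c * (c * d ^ (2 : ℤ) * μword [1, 0, 0] * e)⁻¹,
     d ^ (3 : ℤ) * μword [0, 0, 1, 1] * e ^ (3 : ℤ) * c *
       (c * d ^ (3 : ℤ) * μword [1, 1, 0] * e ^ (3 : ℤ))⁻¹,
     d ^ (4 : ℤ) * μword F₃ * e ^ (4 : ℤ) * c *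
       (c * d ^ (4 : ℤ) * μword E₃ * e ^ (5 : ℤ))⁻¹,
     d * μt * (μt * d)⁻¹,
     e * μk * (μk * e)⁻¹,
     (μword P)⁻¹ * μt * μword P * μk * (μk * (μword P)⁻¹ * μt * μword P)⁻¹,
     a * c * (c * a)⁻¹,
     b * c * (c * b)⁻¹ } : Set F5)

theorem PresentedGroup.subsingleton_of_of_eq_one {ι : Type*} {rels : Set (FreeGroup ι)}
    (h : ∀ i : ι, (PresentedGroup.of i : PresentedGroup rels) = 1) :
    Subsingleton (PresentedGroup rels) := by
  have hid : MonoidHom.id (PresentedGroup rels) = 1 := PresentedGroup.ext h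
  exact ⟨fun x y => (DFunLike.congr_fun hid x).trans (DFunLike.congr_fun hid y).symm⟩

section
variable {G : Type*} [Group G] (φ : F5 →* G)

theorem map_μw_eq_map_b (ha : φ a = 1) (i : ℕ) : φ (μw i) = φ b := by
  simp only [μw, map_mul, map_zpow, ha, one_zpow, one_mul]
  group

theorem map_μword_eq_map_b_pow (ha : φ a = 1) (l : List (Fin 2)) :
    φ (μword l) = φ b ^ l.length := by
  simp only [μword, map_list_prod, List.map_map, Function.comp_def, μs,
    map_μw_eq_map_b φ ha, List.map_const', List.prod_replicate]

/-- With `a = c = 1` every encoded letter becomes `b`, so (R3.2) reads `b⁴ = b³`; then (R3.1)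
reads `d e = d² e` and (R3.3) reads `e⁴ = e⁵`. -/
theorem map_of_eq_one_of_map_rels_eq_one {α : ℕ} {F₃ E₃ P : List (Fin 2)}
    (hφ : ∀ r ∈ rels α F₃ E₃ P ∪ {a, c}, φ r = 1) (i : Fin 5) : φ (FreeGroup.of i) = 1 := by
  have hrel : ∀ x y, x * y⁻¹ ∈ rels α F₃ E₃ P → φ x = φ y := fun x y hxy => by
    simpa only [map_mul, map_inv, mul_inv_eq_one] using hφ _ (Or.inl hxy)
  have ha : φ a = 1 := hφ a (by simp)
  have hc : φ c = 1 := hφ c (by simp)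
  have hb : φ b = 1 := by
    have h := hrel _ _ (Or.inr (by simp) : d ^ (3 : ℤ) * μword [0, 0, 1, 1] * e ^ (3 : ℤ) * c *
      (c * d ^ (3 : ℤ) * μword [1, 1, 0] * e ^ (3 : ℤ))⁻¹ ∈ rels α F₃ E₃ P)
    simp only [map_mul, map_zpow, map_μword_eq_map_b_pow φ ha, hc, mul_one, one_mul,
      List.length_cons, List.length_nil, mul_left_inj, mul_right_inj] at h
    rwa [pow_succ, mul_eq_left] at h
  have hd : φ d = 1 := by
    have h := hrel _ _ (Or.inr (by simp) : d * μword [0, 0, 1, 0, 1] * e * c *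
      (c * d ^ (2 : ℤ) * μword [1, 0, 0] * e)⁻¹ ∈ rels α F₃ E₃ P)
    simp only [map_mul, map_zpow, map_μword_eq_map_b_pow φ ha, hb, hc, one_pow, mul_one,
      one_mul, mul_left_inj] at h
    rwa [zpow_two, left_eq_mul] at h
  have he : φ e = 1 := by
    have h := hrel _ _ (Or.inr (by simp) : d ^ (4 : ℤ) * μword F₃ * e ^ (4 : ℤ) * c *
      (c * d ^ (4 : ℤ) * μword E₃ * e ^ (5 : ℤ))⁻¹ ∈ rels α F₃ E₃ P)
    simp only [map_mul, map_zpow, map_μword_eq_map_b_pow φ ha, hb, hc, hd, one_pow, one_zpow,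
      mul_one, one_mul] at h
    rwa [show (5 : ℤ) = 4 + 1 by norm_num, zpow_add_one, left_eq_mul] at h
  fin_cases i <;> assumption
end

theorem trivialize_R_general (α : ℕ) (F₃ E₃ P : List (Fin 2)) :
    Subsingleton (PresentedGroup (rels α F₃ E₃ P ∪ {a, c})) :=
  PresentedGroup.subsingleton_of_of_eq_one
    (map_of_eq_one_of_map_rels_eq_one _ fun _ => PresentedGroup.one_of_mem)

/-- Adding the relations `a = 1` and `c = 1` to the presentation `R` yields the
trivial group. -/
theorem trivialize_R (α : ℕ) (hα : 5 < α) (F₃ E₃ P : List (Fin 2)) :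
    Subsingleton (PresentedGroup (rels α F₃ E₃ P ∪ {a, c})) :=
  trivialize_R_general α F₃ E₃ P

end Stmt10
end

section
/- Let G be a group with elements c, d, e, k, t and elements s_1, ..., s_N satisfying: d^α s_β = s_β d and e s_β = s_β e^α and s_β c = c s_β for all β; d^{g(i)}F_i e^{h(i)} c = c d^{g'(i)} E_i e^{h'(i)} for some index i; ct = tc; dt = td; ck = kc; ek = ke; and P⁻¹tPk = kP⁻¹tP, where P = R F_i S for words R, S in s_1,...,s_N. Then Q⁻¹tQk = kQ⁻¹tQ holds in G, where Q = R E_i S. -/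
/-!
Pushing `d ^ g` leftwards through the word `R` turns it into `d̂ = d ^ (g * α ^ |R|)`, and
pushing `e ^ h` rightwards through `S` turns it into `ê = e ^ (h * α ^ |S|)` (likewise `d̂'`,
`ê'`); since `c` commutes with every letter, the relation between `Fᵢ` and `Eᵢ` becomes
`d̂ P ê c = c d̂' Q ê'`. Hence `Q = (d̂'⁻¹ c⁻¹ d̂) P (ê c ê'⁻¹)`, where the left factor commutes
with `t` and the right one with `k`, so `Q⁻¹ t Q` is the conjugate of `P⁻¹ t P` by an element
commuting with `k`.
-/

namespace List

variable {M : Type*} [Monoid M] {ι : Type*} {s : ι → M} {x : M} {α : ℕ}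

theorem semiconjBy_prod_map_pow_pow_length (hs : ∀ β, SemiconjBy (s β) x (x ^ α))
    (W : List ι) (m : ℕ) : SemiconjBy (W.map s).prod (x ^ m) (x ^ (m * α ^ W.length)) := by
  induction W generalizing m with
  | nil => simp
  | cons w W ih =>
    have hw : SemiconjBy (s w) (x ^ (m * α ^ W.length)) (x ^ (m * α ^ (W.length + 1))) := by
      rw [pow_succ, ← mul_assoc, mul_comm _ α, pow_mul x α]
      exact (hs w).pow_right _
    exact hw.mul_left (ih m)

theorem semiconjBy_prod_map_pow_length_pow (hs : ∀ β, SemiconjBy (s β) (x ^ α) x)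
    (W : List ι) (m : ℕ) : SemiconjBy (W.map s).prod (x ^ (m * α ^ W.length)) (x ^ m) := by
  induction W generalizing m with
  | nil => simp
  | cons w W ih =>
    have hw : SemiconjBy (s w) (x ^ (m * α)) (x ^ m) := by
      rw [mul_comm, pow_mul]
      exact (hs w).pow_right m
    rw [map_cons, prod_cons, length_cons, pow_succ, mul_comm _ α, ← mul_assoc]
    exact hw.mul_left (ih (m * α))

end List

theorem mul_mul_relation_of_semiconjBy {M : Type*} [Monoid M]
    {R S F E c x₁ x₂ y₁ y₂ X₁ X₂ Y₁ Y₂ : M}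
    (hR₁ : SemiconjBy R x₁ X₁) (hR₂ : SemiconjBy R x₂ X₂)
    (hS₁ : SemiconjBy S Y₁ y₁) (hS₂ : SemiconjBy S Y₂ y₂)
    (hRc : Commute R c) (hSc : Commute S c) (h : x₁ * F * y₁ * c = c * x₂ * E * y₂) :
    X₁ * (R * F * S) * Y₁ * c = c * X₂ * (R * E * S) * Y₂ :=
  calc X₁ * (R * F * S) * Y₁ * c = X₁ * R * F * (S * Y₁) * c := by simp only [mul_assoc]
    _ = R * (x₁ * F * y₁ * (S * c)) := by rw [← hR₁.eq, hS₁.eq]; simp only [mul_assoc]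
    _ = R * (x₁ * F * y₁ * c) * S := by rw [hSc.eq]; simp only [mul_assoc]
    _ = R * c * x₂ * E * y₂ * S := by rw [h]; simp only [mul_assoc]
    _ = c * X₂ * (R * E * S) * Y₂ := by
        rw [hRc.eq, mul_assoc c R, hR₂.eq, mul_assoc _ y₂, ← hS₂.eq]; simp only [mul_assoc]

theorem commute_conj_of_mul_mul_relation {G : Type*} [Group G] {P Q c t k X₁ X₂ Y₁ Y₂ : G}
    (h : X₁ * P * Y₁ * c = c * X₂ * Q * Y₂)
    (htX₁ : Commute t X₁) (htX₂ : Commute t X₂) (htc : Commute t c)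
    (hkY₁ : Commute k Y₁) (hkY₂ : Commute k Y₂) (hkc : Commute k c)
    (hP : Commute k (P⁻¹ * t * P)) : Commute k (Q⁻¹ * t * Q) := by
  have hQ : Q = (X₂⁻¹ * c⁻¹ * X₁) * P * (Y₁ * c * Y₂⁻¹) := by
    rw [show Q = (c * X₂)⁻¹ * (c * X₂ * Q * Y₂) * Y₂⁻¹ by group, ← h]
    group
  have htB : Commute t (X₂⁻¹ * c⁻¹ * X₁) :=
    (htX₂.inv_right.mul_right htc.inv_right).mul_right htX₁
  have hkA : Commute k (Y₁ * c * Y₂⁻¹) := (hkY₁.mul_right hkc).mul_right hkY₂.inv_right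
  have hconj : Q⁻¹ * t * Q = (Y₁ * c * Y₂⁻¹)⁻¹ * (P⁻¹ * t * P) * (Y₁ * c * Y₂⁻¹) := by
    calc Q⁻¹ * t * Q = (Y₁ * c * Y₂⁻¹)⁻¹ * P⁻¹ *
          ((X₂⁻¹ * c⁻¹ * X₁)⁻¹ * (t * (X₂⁻¹ * c⁻¹ * X₁))) * P * (Y₁ * c * Y₂⁻¹) := by
          rw [hQ]; group
      _ = _ := by rw [htB.eq, inv_mul_cancel_left]; group
  rw [hconj]
  exact (hkA.inv_right.mul_right hP).mul_right hkA

theorem commutation_transfer_general {G : Type*} [Group G] {ι : Type*} (s : ι → G)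
    (c d e k t : G) (α g h g' h' : ℕ)
    (Fw Ew Rw Sw : List ι)
    (hB1 : ∀ β, d ^ α * s β = s β * d)
    (hB2 : ∀ β, e * s β = s β * e ^ α)
    (hB3 : ∀ β, s β * c = c * s β)
    (hB4 : d ^ g * (Fw.map s).prod * e ^ h * c = c * d ^ g' * (Ew.map s).prod * e ^ h')
    (hB5 : c * t = t * c) (hB6 : d * t = t * d)
    (hB7 : c * k = k * c) (hB8 : e * k = k * e)
    (hB9 : ((Rw ++ Fw ++ Sw).map s).prod⁻¹ * t * ((Rw ++ Fw ++ Sw).map s).prod * k =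
           k * ((Rw ++ Fw ++ Sw).map s).prod⁻¹ * t * ((Rw ++ Fw ++ Sw).map s).prod) :
    ((Rw ++ Ew ++ Sw).map s).prod⁻¹ * t * ((Rw ++ Ew ++ Sw).map s).prod * k =
      k * ((Rw ++ Ew ++ Sw).map s).prod⁻¹ * t * ((Rw ++ Ew ++ Sw).map s).prod := by
  simp only [List.map_append, List.prod_append] at hB9 ⊢
  set P := (Rw.map s).prod * (Fw.map s).prod * (Sw.map s).prod
  set Q := (Rw.map s).prod * (Ew.map s).prod * (Sw.map s).prod
  have hd : ∀ β, SemiconjBy (s β) d (d ^ α) := fun β => (hB1 β).symm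
  have he : ∀ β, SemiconjBy (s β) (e ^ α) e := fun β => (hB2 β).symm
  have hc : ∀ W : List ι, Commute (W.map s).prod c :=
    fun W => Commute.list_prod_left _ _ (List.forall_mem_map.2 fun β _ => hB3 β)
  have key := mul_mul_relation_of_semiconjBy
    (List.semiconjBy_prod_map_pow_pow_length hd Rw g)
    (List.semiconjBy_prod_map_pow_pow_length hd Rw g')
    (List.semiconjBy_prod_map_pow_length_pow he Sw h)
    (List.semiconjBy_prod_map_pow_length_pow he Sw h') (hc Rw) (hc Sw) hB4
  have htd : Commute t d := hB6.symm
  have hke : Commute k e := hB8.symm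
  have hP : Commute k (P⁻¹ * t * P) := by
    simpa only [Commute, SemiconjBy, mul_assoc] using hB9.symm
  have hQ : Commute k (Q⁻¹ * t * Q) :=
    commute_conj_of_mul_mul_relation key (htd.pow_right _) (htd.pow_right _) hB5.symm
      (hke.pow_right _) (hke.pow_right _) hB7.symm hP
  simpa only [Commute, SemiconjBy, mul_assoc] using hQ.eq.symm

/-- Borisov-type relations imply the commutation relation for `Q = R Eᵢ S` if it holds
for `P = R Fᵢ S`.  Words in the letters `s₁,…,s_N` are represented as lists over an index
type `ι`, evaluated in `G` by `fun W => (W.map s).prod`. -/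
theorem commutation_transfer {G : Type*} [Group G] {ι : Type*} (s : ι → G)
    (c d e k t : G) (α g h g' h' : ℕ)
    (hα : 0 < α) (hg : 0 < g) (hh : 0 < h) (hg' : 0 < g') (hh' : 0 < h')
    (Fw Ew Rw Sw : List ι)
    (hB1 : ∀ β, d ^ α * s β = s β * d)
    (hB2 : ∀ β, e * s β = s β * e ^ α)
    (hB3 : ∀ β, s β * c = c * s β)
    (hB4 : d ^ g * (Fw.map s).prod * e ^ h * c = c * d ^ g' * (Ew.map s).prod * e ^ h')
    (hB5 : c * t = t * c) (hB6 : d * t = t * d)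
    (hB7 : c * k = k * c) (hB8 : e * k = k * e)
    (hB9 : ((Rw ++ Fw ++ Sw).map s).prod⁻¹ * t * ((Rw ++ Fw ++ Sw).map s).prod * k =
           k * ((Rw ++ Fw ++ Sw).map s).prod⁻¹ * t * ((Rw ++ Fw ++ Sw).map s).prod) :
    ((Rw ++ Ew ++ Sw).map s).prod⁻¹ * t * ((Rw ++ Ew ++ Sw).map s).prod * k =
      k * ((Rw ++ Ew ++ Sw).map s).prod⁻¹ * t * ((Rw ++ Ew ++ Sw).map s).prod :=
  commutation_transfer_general s c d e k t α g h g' h' Fw Ew Rw Sw hB1 hB2 hB3 hB4 hB5 hB6 hB7 hB8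
    hB9
end

section
/- Let G be a group and suppose elements c, k, t, d, e, and P, Q, d^, d'^, e^, e'^ ∈ G satisfy: c d'^ Q e'^ = d^ P e^ c, ct = tc, ck = kc, and d^ commutes with t, e^ commutes with k, e'^ commutes with k, and P⁻¹tPk = kP⁻¹tP. Then Q⁻¹tQk = kQ⁻¹tQ. -/
/-- Abstract form of Borisov's final computation: if `c d'^ Q e'^ = d^ P e^ c`, `c` commutes
with `t` and `k`, the elements `d^, d'^` commute with `t`, the elements `e^, e'^` commute
with `k`, and `P⁻¹tPk = kP⁻¹tP`, then `Q⁻¹tQk = kQ⁻¹tQ`. -/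
theorem commutation_conjugation_transfer {G : Type*} [Group G]
    (c k t P Q dh dh' eh eh' : G)
    (hX : c * dh' * Q * eh' = dh * P * eh * c)
    (hct : c * t = t * c) (hck : c * k = k * c)
    (hdt : dh * t = t * dh) (hd't : dh' * t = t * dh')
    (hek : eh * k = k * eh) (he'k : eh' * k = k * eh')
    (hP : P⁻¹ * t * P * k = k * P⁻¹ * t * P) :
    Q⁻¹ * t * Q * k = k * Q⁻¹ * t * Q := by
  have swap : ∀ a b : G, a * b = b * a → a⁻¹ * b = b * a⁻¹ := fun a b h => by
    rw [inv_mul_eq_iff_eq_mul, ← mul_assoc, h, mul_assoc, mul_inv_cancel, mul_one]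
  have hQ : Q = dh'⁻¹ * c⁻¹ * dh * P * eh * c * eh'⁻¹ := by
    calc Q = dh'⁻¹ * c⁻¹ * (c * dh' * Q * eh') * eh'⁻¹ := by group
      _ = dh'⁻¹ * c⁻¹ * (dh * P * eh * c) * eh'⁻¹ := by rw [hX]
      _ = dh'⁻¹ * c⁻¹ * dh * P * eh * c * eh'⁻¹ := by group
  have key : Q⁻¹ * t * Q = eh' * c⁻¹ * eh⁻¹ * (P⁻¹ * t * P) * eh * c * eh'⁻¹ := by
    subst hQ
    calc (dh'⁻¹ * c⁻¹ * dh * P * eh * c * eh'⁻¹)⁻¹ * t *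
          (dh'⁻¹ * c⁻¹ * dh * P * eh * c * eh'⁻¹)
        = eh' * c⁻¹ * eh⁻¹ * P⁻¹ * dh⁻¹ * c * (dh' * t * dh'⁻¹) * c⁻¹ * dh * P * eh * c
            * eh'⁻¹ := by group
      _ = eh' * c⁻¹ * eh⁻¹ * P⁻¹ * dh⁻¹ * (c * t * c⁻¹) * dh * P * eh * c * eh'⁻¹ := by
            rw [hd't]; group
      _ = eh' * c⁻¹ * eh⁻¹ * P⁻¹ * (dh⁻¹ * t * dh) * P * eh * c * eh'⁻¹ := by
            rw [hct]; group
      _ = eh' * c⁻¹ * eh⁻¹ * (P⁻¹ * t * P) * eh * c * eh'⁻¹ := by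
            rw [show dh⁻¹ * t * dh = t by
              rw [mul_assoc, ← hdt, ← mul_assoc, inv_mul_cancel, one_mul]]
            group
  rw [key]
  have hck' := swap c k hck
  have hek' := swap eh k hek
  have he'k' := swap eh' k he'k
  have hPk : (P⁻¹ * t * P) * k = k * (P⁻¹ * t * P) := by rw [hP]; group
  calc eh' * c⁻¹ * eh⁻¹ * (P⁻¹ * t * P) * eh * c * eh'⁻¹ * k
      = eh' * c⁻¹ * eh⁻¹ * (P⁻¹ * t * P) * eh * c * (eh'⁻¹ * k) := by group
    _ = eh' * c⁻¹ * eh⁻¹ * (P⁻¹ * t * P) * eh * (c * k) * eh'⁻¹ := by rw [he'k']; group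
    _ = eh' * c⁻¹ * eh⁻¹ * (P⁻¹ * t * P) * (eh * k) * c * eh'⁻¹ := by rw [hck]; group
    _ = eh' * c⁻¹ * eh⁻¹ * ((P⁻¹ * t * P) * k) * eh * c * eh'⁻¹ := by rw [hek]; group
    _ = eh' * c⁻¹ * (eh⁻¹ * k) * (P⁻¹ * t * P) * eh * c * eh'⁻¹ := by rw [hPk]; group
    _ = eh' * (c⁻¹ * k) * eh⁻¹ * (P⁻¹ * t * P) * eh * c * eh'⁻¹ := by rw [hek']; group
    _ = (eh' * k) * c⁻¹ * eh⁻¹ * (P⁻¹ * t * P) * eh * c * eh'⁻¹ := by rw [hck']; group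
    _ = k * (eh' * c⁻¹ * eh⁻¹ * (P⁻¹ * t * P) * eh * c * eh'⁻¹) := by rw [he'k]; group
    _ = k * Q⁻¹ * t * Q := by rw [← key]; group
end
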